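/- arXiv:1802.01419 — 3 statements merged into one kernel-verified Lean document; each statement's English description precedes it below -/
import Mathlib

section
/- For any two finite posets O and P on disjoint ground sets and any natural number m, the number of extensions satisfies e(m, O + P) = e(m,O) · e(m,P). -/
open scoped Classical

variable {α : Type*} [DecidableEq α]

/-- `q` is a partial order relation with ground set `S`: it is a set of pairs
contained in `S × S`, reflexive on `S`, transitive and antisymmetric. -/
def IsPOon (S : Finset α) (q : Finset (α × α)) : Prop :=
  q ⊆ S ×ˢ S ∧ (∀ x ∈ S, (x, x) ∈ q) ∧
  (∀ x y z : α, (x, y) ∈ q → (y, z) ∈ q → (x, z) ∈ q) ∧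
  (∀ x y : α, (x, y) ∈ q → (y, x) ∈ q → x = y)

/-- The relation induced on a subset `A` of the ground set. -/
def restrictRel (q : Finset (α × α)) (A : Finset α) : Finset (α × α) :=
  q.filter fun r => r.1 ∈ A ∧ r.2 ∈ A

/-- The downsets of the poset `(S, q)`. -/
noncomputable def downsets (S : Finset α) (q : Finset (α × α)) : Finset (Finset α) :=
  S.powerset.filter fun D => ∀ y ∈ D, ∀ x : α, (x, y) ∈ q → x ∈ D

/-- `d(P)`, the number of downsets of the poset `(S, q)`. -/
noncomputable def dnum (S : Finset α) (q : Finset (α × α)) : ℕ :=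
  (downsets S q).card

/-- The upsets of the poset `(S, q)`. -/
noncomputable def upsets (S : Finset α) (q : Finset (α × α)) : Finset (Finset α) :=
  S.powerset.filter fun U => ∀ x ∈ U, ∀ y : α, (x, y) ∈ q → y ∈ U

/-- Down-closure `QA = {x : x ≤_Q a for some a ∈ A}`. -/
def dcl (q : Finset (α × α)) (A : Finset α) : Finset α :=
  (q.filter fun r => r.2 ∈ A).image Prod.fst

/-- Up-closure `AQ = {y : a ≤_Q y for some a ∈ A}`. -/
def ucl (q : Finset (α × α)) (A : Finset α) : Finset α :=
  (q.filter fun r => r.1 ∈ A).image Prod.snd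

/-- The set of minimal elements of the poset `(S, q)`. -/
noncomputable def minset (S : Finset α) (q : Finset (α × α)) : Finset α :=
  S.filter fun x => ∀ y : α, (y, x) ∈ q → y = x

/-- `E(M, P)`: the partial orders on `M ∪ K` inducing `p` on `K` whose set of
minimal elements is exactly `M`. -/
noncomputable def extPOs (M K : Finset α) (p : Finset (α × α)) :
    Finset (Finset (α × α)) :=
  ((M ∪ K) ×ˢ (M ∪ K)).powerset.filter fun q =>
    IsPOon (M ∪ K) q ∧ restrictRel q K = p ∧ minset (M ∪ K) q = M

/-- `A` is an antichain of the poset `(S, q)`. -/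
def isAntichain (S : Finset α) (q : Finset (α × α)) (A : Finset α) : Prop :=
  A ⊆ S ∧ ∀ x ∈ A, ∀ y ∈ A, (x, y) ∈ q → x = y

/-- The posets `(S, q)` and `(T, r)` are order-isomorphic. -/
def POIso {β : Type*} (S : Finset α) (q : Finset (α × α))
    (T : Finset β) (r : Finset (β × β)) : Prop :=
  ∃ f : α → β, Set.BijOn f ↑S ↑T ∧ ∀ x ∈ S, ∀ y ∈ S, ((x, y) ∈ q ↔ (f x, f y) ∈ r)

/-- `C` is a chain of the poset `(S, q)`. -/
def isChainOn (S : Finset α) (q : Finset (α × α)) (C : Finset α) : Prop :=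
  C ⊆ S ∧ ∀ x ∈ C, ∀ y ∈ C, (x, y) ∈ q ∨ (y, x) ∈ q

/-- The height of the poset `(S, q)`: the maximal size of a chain. -/
noncomputable def heightP (S : Finset α) (q : Finset (α × α)) : ℕ :=
  (S.powerset.filter (isChainOn S q)).sup Finset.card

set_option linter.unusedSectionVars false

lemma mem_restrictRel {q : Finset (α × α)} {A : Finset α} {r : α × α} :
    r ∈ restrictRel q A ↔ r ∈ q ∧ r.1 ∈ A ∧ r.2 ∈ A := by
  simp [restrictRel, Finset.mem_filter, and_assoc]

lemma mem_minset {S : Finset α} {q : Finset (α × α)} {x : α} :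
    x ∈ minset S q ↔ x ∈ S ∧ ∀ y : α, (y, x) ∈ q → y = x := by
  simp [minset, Finset.mem_filter]

lemma mem_extPOs {M K : Finset α} {p q : Finset (α × α)} :
    q ∈ extPOs M K p ↔ IsPOon (M ∪ K) q ∧ restrictRel q K = p ∧ minset (M ∪ K) q = M := by
  constructor
  · intro h; exact (Finset.mem_filter.mp h).2
  · intro h
    exact Finset.mem_filter.mpr ⟨Finset.mem_powerset.mpr h.1.1, h⟩

section Main
variable {M X Y : Finset α} (hXY : Disjoint X Y) (hM : Disjoint M (X ∪ Y))
  {o p : Finset (α × α)} (ho : IsPOon X o) (hp : IsPOon Y p)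

include hXY in
lemma mem_M_of_both {a : α} (h1 : a ∈ M ∪ X) (h2 : a ∈ M ∪ Y) : a ∈ M := by
  rcases Finset.mem_union.mp h1 with h | h
  · exact h
  rcases Finset.mem_union.mp h2 with h' | h'
  · exact h'
  · exact (Finset.disjoint_left.mp hXY h h').elim

include hXY hM ho hp

-- no cross pairs, and split lemma
lemma split_pair {q : Finset (α × α)} (hq : q ∈ extPOs M (X ∪ Y) (o ∪ p)) :
    ∀ r ∈ q, (r.1 ∈ M ∪ X ∧ r.2 ∈ M ∪ X) ∨ (r.1 ∈ M ∪ Y ∧ r.2 ∈ M ∪ Y) := by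
  obtain ⟨hpo, hres, hmin⟩ := mem_extPOs.mp hq
  intro r hr
  have h1 := (Finset.mem_product.mp (hpo.1 hr)).1
  have h2 := (Finset.mem_product.mp (hpo.1 hr)).2
  have cross : ∀ a b : α, (a, b) ∈ q → a ∈ X ∪ Y → b ∈ X ∪ Y →
      (a ∈ X ∧ b ∈ X) ∨ (a ∈ Y ∧ b ∈ Y) := by
    intro a b hab ha hb
    have : (a, b) ∈ restrictRel q (X ∪ Y) := mem_restrictRel.mpr ⟨hab, ha, hb⟩
    rw [hres] at this
    rcases Finset.mem_union.mp this with h | h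
    · left; exact Finset.mem_product.mp (ho.1 h)
    · right; exact Finset.mem_product.mp (hp.1 h)
  obtain ⟨a, b⟩ := r
  simp only [Finset.mem_union] at h1 h2 ⊢
  rcases h1 with ha | ha | ha
  · rcases h2 with hb | hb | hb <;> tauto
  · rcases h2 with hb | hb | hb
    · tauto
    · tauto
    · rcases cross a b hr (by simp [ha]) (by simp [hb]) with ⟨_, h⟩ | ⟨h, _⟩
      · exact (Finset.disjoint_left.mp hXY h hb).elim
      · exact (Finset.disjoint_left.mp hXY ha h).elim
  · rcases h2 with hb | hb | hb
    · tauto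
    · rcases cross a b hr (by simp [ha]) (by simp [hb]) with ⟨h, _⟩ | ⟨_, h⟩
      · exact (Finset.disjoint_left.mp hXY h ha).elim
      · exact (Finset.disjoint_left.mp hXY hb h).elim
    · tauto

lemma restrict_mem {q : Finset (α × α)} (hq : q ∈ extPOs M (X ∪ Y) (o ∪ p)) :
    restrictRel q (M ∪ X) ∈ extPOs M X o := by
  obtain ⟨hpo, hres, hmin⟩ := mem_extPOs.mp hq
  have hMX : Disjoint M X := hM.mono_right Finset.subset_union_left
  have hMsub : M ⊆ M ∪ (X ∪ Y) := Finset.subset_union_left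
  have hmin' : ∀ b ∈ M, ∀ a : α, (a, b) ∈ q → a = b := by
    intro b hb a hab
    rw [← hmin] at hb
    exact (mem_minset.mp hb).2 a hab
  have key := split_pair hXY hM ho hp hq
  refine mem_extPOs.mpr ⟨?_, ?_, ?_⟩
  · refine ⟨?_, ?_, ?_, ?_⟩
    · intro r hr
      obtain ⟨_, h1, h2⟩ := mem_restrictRel.mp hr
      exact Finset.mem_product.mpr ⟨h1, h2⟩
    · intro x hx
      refine mem_restrictRel.mpr ⟨hpo.2.1 x ?_, hx, hx⟩
      rcases Finset.mem_union.mp hx with h | h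
      · exact hMsub h
      · simp [Finset.mem_union, h]
    · intro x y z h1 h2
      obtain ⟨h1q, hx, hy⟩ := mem_restrictRel.mp h1
      obtain ⟨h2q, _, hz⟩ := mem_restrictRel.mp h2
      exact mem_restrictRel.mpr ⟨hpo.2.2.1 x y z h1q h2q, hx, hz⟩
    · intro x y h1 h2
      exact hpo.2.2.2 x y (mem_restrictRel.mp h1).1 (mem_restrictRel.mp h2).1
  · -- restrictRel (restrictRel q (M ∪ X)) X = o
    ext r
    simp only [mem_restrictRel]
    constructor
    · rintro ⟨⟨hrq, -, -⟩, h1, h2⟩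
      have : r ∈ restrictRel q (X ∪ Y) :=
        mem_restrictRel.mpr ⟨hrq, by simp [h1], by simp [h2]⟩
      rw [hres] at this
      rcases Finset.mem_union.mp this with h | h
      · exact h
      · exact (Finset.disjoint_left.mp hXY h1 (Finset.mem_product.mp (hp.1 h)).1).elim
    · intro hr
      obtain ⟨h1, h2⟩ := Finset.mem_product.mp (ho.1 hr)
      have : r ∈ restrictRel q (X ∪ Y) := by
        rw [hres]; exact Finset.mem_union_left _ hr
      exact ⟨⟨(mem_restrictRel.mp this).1, by simp [h1], by simp [h2]⟩, h1, h2⟩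
  · -- minset
    ext x
    simp only [mem_minset]
    constructor
    · rintro ⟨hx, hxmin⟩
      rcases Finset.mem_union.mp hx with h | h
      · exact h
      · -- x ∈ X; show x minimal in q, so x ∈ M... i.e. x ∈ minset = M
        have hxM : x ∉ M := fun hc => (Finset.disjoint_left.mp hMX hc) h
        have : x ∈ minset (M ∪ (X ∪ Y)) q := by
          refine mem_minset.mpr ⟨by simp [Finset.mem_union, h], ?_⟩
          intro y hyx
          rcases key (y, x) hyx with ⟨hy, _⟩ | ⟨_, hx2⟩
          · exact hxmin y (mem_restrictRel.mpr ⟨hyx, hy, Finset.mem_union_right _ h⟩)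
          · rcases Finset.mem_union.mp hx2 with h' | h'
            · exact absurd h' hxM
            · exact (Finset.disjoint_left.mp hXY h h').elim
        rw [hmin] at this; exact this
    · intro hx
      refine ⟨Finset.mem_union_left _ hx, ?_⟩
      intro y hyx
      exact hmin' x hx y (mem_restrictRel.mp hyx).1

lemma union_restrict {q : Finset (α × α)} (hq : q ∈ extPOs M (X ∪ Y) (o ∪ p)) :
    restrictRel q (M ∪ X) ∪ restrictRel q (M ∪ Y) = q := by
  apply Finset.Subset.antisymm
  · apply Finset.union_subset <;> exact Finset.filter_subset _ _
  · intro r hr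
    rcases split_pair hXY hM ho hp hq r hr with ⟨h1, h2⟩ | ⟨h1, h2⟩
    · exact Finset.mem_union_left _ (mem_restrictRel.mpr ⟨hr, h1, h2⟩)
    · exact Finset.mem_union_right _ (mem_restrictRel.mpr ⟨hr, h1, h2⟩)


lemma union_mem {q₁ q₂ : Finset (α × α)} (h1 : q₁ ∈ extPOs M X o)
    (h2 : q₂ ∈ extPOs M Y p) : q₁ ∪ q₂ ∈ extPOs M (X ∪ Y) (o ∪ p) := by
  obtain ⟨po1, res1, min1⟩ := mem_extPOs.mp h1
  obtain ⟨po2, res2, min2⟩ := mem_extPOs.mp h2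
  have sub1 : ∀ r ∈ q₁, r.1 ∈ M ∪ X ∧ r.2 ∈ M ∪ X := fun r hr =>
    Finset.mem_product.mp (po1.1 hr)
  have sub2 : ∀ r ∈ q₂, r.1 ∈ M ∪ Y ∧ r.2 ∈ M ∪ Y := fun r hr =>
    Finset.mem_product.mp (po2.1 hr)
  have min1' : ∀ b ∈ M, ∀ a : α, (a, b) ∈ q₁ → a = b := by
    intro b hb a hab
    rw [← min1] at hb; exact (mem_minset.mp hb).2 a hab
  have min2' : ∀ b ∈ M, ∀ a : α, (a, b) ∈ q₂ → a = b := by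
    intro b hb a hab
    rw [← min2] at hb; exact (mem_minset.mp hb).2 a hab
  refine mem_extPOs.mpr ⟨⟨?_, ?_, ?_, ?_⟩, ?_, ?_⟩
  · intro r hr
    rcases Finset.mem_union.mp hr with h | h
    · obtain ⟨ha, hb⟩ := sub1 r h
      refine Finset.mem_product.mpr ⟨?_, ?_⟩ <;>
        simp only [Finset.mem_union] at * <;> tauto
    · obtain ⟨ha, hb⟩ := sub2 r h
      refine Finset.mem_product.mpr ⟨?_, ?_⟩ <;>
        simp only [Finset.mem_union] at * <;> tauto
  · intro x hx
    simp only [Finset.mem_union] at hx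
    rcases hx with h | h | h
    · exact Finset.mem_union_left _ (po1.2.1 x (Finset.mem_union_left _ h))
    · exact Finset.mem_union_left _ (po1.2.1 x (Finset.mem_union_right _ h))
    · exact Finset.mem_union_right _ (po2.2.1 x (Finset.mem_union_right _ h))
  · intro x y z hxy hyz
    rcases Finset.mem_union.mp hxy with hxy | hxy <;>
      rcases Finset.mem_union.mp hyz with hyz | hyz
    · exact Finset.mem_union_left _ (po1.2.2.1 x y z hxy hyz)
    · have hyM : y ∈ M := mem_M_of_both hXY (sub1 _ hxy).2 (sub2 _ hyz).1
      have := min1' y hyM x hxy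
      subst this; exact Finset.mem_union_right _ hyz
    · have hyM : y ∈ M := mem_M_of_both hXY (sub1 _ hyz).1 (sub2 _ hxy).2
      have := min2' y hyM x hxy
      subst this; exact Finset.mem_union_left _ hyz
    · exact Finset.mem_union_right _ (po2.2.2.1 x y z hxy hyz)
  · intro x y hxy hyx
    rcases Finset.mem_union.mp hxy with hxy | hxy <;>
      rcases Finset.mem_union.mp hyx with hyx | hyx
    · exact po1.2.2.2 x y hxy hyx
    · exact min1' y (mem_M_of_both hXY (sub1 _ hxy).2 (sub2 _ hyx).1) x hxy
    · exact (min1' x (mem_M_of_both hXY (sub1 _ hyx).2 (sub2 _ hxy).1) y hyx).symm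
    · exact po2.2.2.2 x y hxy hyx
  · -- restrictRel (q₁ ∪ q₂) (X ∪ Y) = o ∪ p
    ext r
    simp only [mem_restrictRel]
    constructor
    · rintro ⟨hr, h1', h2'⟩
      rcases Finset.mem_union.mp hr with hr | hr
      · refine Finset.mem_union_left _ ?_
        rw [← res1]
        refine mem_restrictRel.mpr ⟨hr, ?_, ?_⟩
        · rcases Finset.mem_union.mp (sub1 _ hr).1 with h | h
          · exact absurd h1' (Finset.disjoint_left.mp hM h)
          · exact h
        · rcases Finset.mem_union.mp (sub1 _ hr).2 with h | h
          · exact absurd h2' (Finset.disjoint_left.mp hM h)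
          · exact h
      · refine Finset.mem_union_right _ ?_
        rw [← res2]
        refine mem_restrictRel.mpr ⟨hr, ?_, ?_⟩
        · rcases Finset.mem_union.mp (sub2 _ hr).1 with h | h
          · exact absurd h1' (Finset.disjoint_left.mp hM h)
          · exact h
        · rcases Finset.mem_union.mp (sub2 _ hr).2 with h | h
          · exact absurd h2' (Finset.disjoint_left.mp hM h)
          · exact h
    · intro hor
      rcases Finset.mem_union.mp hor with hr | hr
      · obtain ⟨ha, hb⟩ := Finset.mem_product.mp (ho.1 hr)
        have hrq : r ∈ restrictRel q₁ X := by rw [res1]; exact hr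
        exact ⟨Finset.mem_union_left _ (mem_restrictRel.mp hrq).1,
          Finset.mem_union_left _ ha, Finset.mem_union_left _ hb⟩
      · obtain ⟨ha, hb⟩ := Finset.mem_product.mp (hp.1 hr)
        have hrq : r ∈ restrictRel q₂ Y := by rw [res2]; exact hr
        exact ⟨Finset.mem_union_right _ (mem_restrictRel.mp hrq).1,
          Finset.mem_union_right _ ha, Finset.mem_union_right _ hb⟩
  · -- minset
    ext x
    simp only [mem_minset]
    constructor
    · rintro ⟨hx, hxmin⟩
      simp only [Finset.mem_union] at hx
      rcases hx with h | h | h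
      · exact h
      · -- x ∈ X: minimal in q₁ ∪ q₂ → minimal in q₁ → x ∈ M
        have : x ∈ minset (M ∪ X) q₁ := mem_minset.mpr
          ⟨Finset.mem_union_right _ h, fun y hy => hxmin y (Finset.mem_union_left _ hy)⟩
        rw [min1] at this; exact this
      · have : x ∈ minset (M ∪ Y) q₂ := mem_minset.mpr
          ⟨Finset.mem_union_right _ h, fun y hy => hxmin y (Finset.mem_union_right _ hy)⟩
        rw [min2] at this; exact this
    · intro hx
      refine ⟨Finset.mem_union_left _ hx, ?_⟩
      intro y hy
      rcases Finset.mem_union.mp hy with h | h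
      · exact min1' x hx y h
      · exact min2' x hx y h

lemma restrict_union_left {q₁ q₂ : Finset (α × α)} (h1 : q₁ ∈ extPOs M X o)
    (h2 : q₂ ∈ extPOs M Y p) : restrictRel (q₁ ∪ q₂) (M ∪ X) = q₁ := by
  obtain ⟨po1, res1, min1⟩ := mem_extPOs.mp h1
  obtain ⟨po2, res2, min2⟩ := mem_extPOs.mp h2
  ext r
  simp only [mem_restrictRel]
  constructor
  · rintro ⟨hr, h1', h2'⟩
    rcases Finset.mem_union.mp hr with hr | hr
    · exact hr
    · -- r ∈ q₂ with both coords in M ∪ X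
      obtain ⟨ha, hb⟩ := Finset.mem_product.mp (po2.1 hr)
      have hbM : r.2 ∈ M := mem_M_of_both hXY h2' hb
      have heq : r.1 = r.2 := by
        rw [← min2] at hbM
        exact (mem_minset.mp hbM).2 r.1 (by simpa using hr)
      have hbM' : r.2 ∈ M := mem_M_of_both hXY h2' hb
      have hre : r = (r.2, r.2) := by rw [Prod.ext_iff]; exact ⟨heq, rfl⟩
      rw [hre]
      exact po1.2.1 r.2 (Finset.mem_union_left _ hbM')
  · intro hr
    obtain ⟨ha, hb⟩ := Finset.mem_product.mp (po1.1 hr)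
    exact ⟨Finset.mem_union_left _ hr, ha, hb⟩

end Main


theorem stmt_11' {M X Y : Finset α} (hXY : Disjoint X Y)
    (hM : Disjoint M (X ∪ Y)) (o p : Finset (α × α))
    (ho : IsPOon X o) (hp : IsPOon Y p) :
    (extPOs M (X ∪ Y) (o ∪ p)).card =
      (extPOs M X o).card * (extPOs M Y p).card := by
  have hM' : Disjoint M (Y ∪ X) := by rwa [Finset.union_comm Y X]
  rw [← Finset.card_product]
  refine Finset.card_nbij' (fun q => (restrictRel q (M ∪ X), restrictRel q (M ∪ Y)))
    (fun pr => pr.1 ∪ pr.2) ?_ ?_ ?_ ?_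
  · intro q hq
    refine Finset.mem_product.mpr ⟨restrict_mem hXY hM ho hp hq, ?_⟩
    have hq' : q ∈ extPOs M (Y ∪ X) (p ∪ o) := by
      rwa [Finset.union_comm Y X, Finset.union_comm p o]
    exact restrict_mem hXY.symm hM' hp ho hq'
  · rintro ⟨q₁, q₂⟩ hpr
    obtain ⟨h1, h2⟩ := Finset.mem_product.mp hpr
    exact union_mem hXY hM ho hp h1 h2
  · intro q hq
    exact union_restrict hXY hM ho hp hq
  · rintro ⟨q₁, q₂⟩ hpr
    obtain ⟨h1, h2⟩ := Finset.mem_product.mp hpr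
    refine Prod.ext (restrict_union_left hXY hM ho hp h1 h2) ?_
    have : restrictRel (q₂ ∪ q₁) (M ∪ Y) = q₂ :=
      restrict_union_left hXY.symm hM' hp ho h2 h1
    rwa [Finset.union_comm q₂ q₁] at this

/-- Theorem 4.4(3): `e(m, O + P) = e(m,O) · e(m,P)` for the cardinal (disjoint) sum. -/
theorem stmt_11 (M X Y : Finset α) (hXY : Disjoint X Y)
    (hM : Disjoint M (X ∪ Y)) (o p : Finset (α × α))
    (ho : IsPOon X o) (hp : IsPOon Y p) :
    (extPOs M (X ∪ Y) (o ∪ p)).card =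
      (extPOs M X o).card * (extPOs M Y p).card :=
  stmt_11' hXY hM o p ho hp
end

section
/- For natural numbers m and k, let e_k(m) denote the number of partial orders on the set {1, …, m+k} whose set of minimal elements is exactly {1, …, m}. If k is a prime number, then k divides e_k(m) − 2^{mk} − (−1)^k (as an integer). -/
open scoped Classical

variable {α : Type*} [DecidableEq α]

/-- The number of partial orders on `{1, …, m+k}` whose set of minimal elements
is exactly `{1, …, m}`. -/
noncomputable def eSum (m k : ℕ) : ℕ :=
  (((Finset.Icc 1 (m + k)) ×ˢ (Finset.Icc 1 (m + k))).powerset.filter fun q =>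
    IsPOon (Finset.Icc 1 (m + k)) q ∧
      minset (Finset.Icc 1 (m + k)) q = Finset.Icc 1 m).card

namespace S18


/-- rotation by `t` of the block `{m+1, …, m+k}`, identity elsewhere. -/
def rot (m k t : ℕ) (x : ℕ) : ℕ :=
  if m + 1 ≤ x ∧ x ≤ m + k then m + 1 + ((x - (m+1) + t) % k) else x

variable {m k : ℕ}

lemma rot_of_le {t x : ℕ} (h : x ≤ m) : rot m k t x = x := by
  unfold rot; rw [if_neg]; omega

lemma rot_of_mem (hk : 0 < k) {t x : ℕ} (h1 : m + 1 ≤ x) (h2 : x ≤ m + k) :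
    rot m k t x = m + 1 + ((x - (m+1) + t) % k) := by
  unfold rot; rw [if_pos ⟨h1, h2⟩]

lemma rot_mem (hk : 0 < k) {t x : ℕ} (h1 : m + 1 ≤ x) (h2 : x ≤ m + k) :
    m + 1 ≤ rot m k t x ∧ rot m k t x ≤ m + k := by
  rw [rot_of_mem hk h1 h2]
  have := Nat.mod_lt (x - (m+1) + t) hk
  omega

lemma rot_mem_S (hk : 0 < k) {t x : ℕ} (h1 : 1 ≤ x) (h2 : x ≤ m + k) :
    1 ≤ rot m k t x ∧ rot m k t x ≤ m + k := by
  by_cases h : m + 1 ≤ x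
  · have := rot_mem (m := m) hk h h2 (t := t); omega
  · rw [rot_of_le (by omega)]; omega

lemma rot_rot (hk : 0 < k) (a b x : ℕ) :
    rot m k a (rot m k b x) = rot m k (a + b) x := by
  by_cases h : m + 1 ≤ x ∧ x ≤ m + k
  · obtain ⟨h1, h2⟩ := h
    have h3 := rot_mem (m := m) hk h1 h2 (t := b)
    rw [rot_of_mem hk h1 h2] at h3 ⊢
    rw [rot_of_mem hk h3.1 h3.2, rot_of_mem hk h1 h2]
    congr 1
    have h4 : m + 1 + (x - (m + 1) + b) % k - (m + 1) = (x - (m+1) + b) % k := by omega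
    rw [h4, Nat.mod_add_mod]
    congr 1; omega
  · have hx : x ≤ m ∨ m + k < x := by omega
    unfold rot
    rw [if_neg h, if_neg h]
    rw [if_neg h]

lemma rot_of_kdvd (hk : 0 < k) {t : ℕ} (h : k ∣ t) (x : ℕ) : rot m k t x = x := by
  by_cases hx : m + 1 ≤ x ∧ x ≤ m + k
  · obtain ⟨c, rfl⟩ := h
    rw [rot_of_mem hk hx.1 hx.2, Nat.add_mul_mod_self_left, Nat.mod_eq_of_lt (by omega)]
    omega
  · unfold rot; rw [if_neg hx]


lemma rot_mod (hk : 0 < k) (t x : ℕ) : rot m k (t % k) x = rot m k t x := by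
  by_cases hx : m + 1 ≤ x ∧ x ≤ m + k
  · rw [rot_of_mem hk hx.1 hx.2, rot_of_mem hk hx.1 hx.2]
    congr 1
    conv_lhs => rw [Nat.add_mod]
    conv_rhs => rw [Nat.add_mod]
    simp
  · unfold rot; rw [if_neg hx, if_neg hx]

/-- inverse rotation amount -/
def rinv (k t : ℕ) : ℕ := k - t % k

lemma rot_rinv (hk : 0 < k) (t x : ℕ) : rot m k (rinv k t) (rot m k t x) = x := by
  rw [rot_rot hk, rot_of_kdvd hk]
  have h1 := Nat.mod_add_div t k
  have hlt : t % k < k := Nat.mod_lt _ hk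
  have h3 : t % k + k * (t / k) = t := Nat.mod_add_div t k
  have h2 : rinv k t + t = k + k * (t / k) := by
    unfold rinv
    generalize hE : k * (t / k) = e at h3
    generalize hR : t % k = r at h3 hlt ⊢
    omega
  rw [h2]
  exact ⟨1 + t / k, by ring⟩

lemma rinv_rot (hk : 0 < k) (t x : ℕ) : rot m k t (rot m k (rinv k t) x) = x := by
  rw [rot_rot hk, rot_of_kdvd hk]
  have h1 := Nat.mod_add_div t k
  have hlt : t % k < k := Nat.mod_lt _ hk
  have h3 : t % k + k * (t / k) = t := Nat.mod_add_div t k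
  have h2 : t + rinv k t = k + k * (t / k) := by
    unfold rinv
    generalize hE : k * (t / k) = e at h3
    generalize hR : t % k = r at h3 hlt ⊢
    omega
  rw [h2]
  exact ⟨1 + t / k, by ring⟩

lemma rot_injective (hk : 0 < k) (t : ℕ) : Function.Injective (rot m k t) :=
  Function.LeftInverse.injective (rot_rinv hk t)


/-- image of a relation under rotation -/
noncomputable def rotQ (m k t : ℕ) (q : Finset (ℕ × ℕ)) : Finset (ℕ × ℕ) :=
  q.image (Prod.map (rot m k t) (rot m k t))

lemma mem_rotQ_of_mem {t : ℕ} {q : Finset (ℕ × ℕ)} {x y : ℕ} (h : (x, y) ∈ q) :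
    (rot m k t x, rot m k t y) ∈ rotQ m k t q :=
  Finset.mem_image_of_mem _ h

lemma mem_rotQ_iff (hk : 0 < k) {t : ℕ} {q : Finset (ℕ × ℕ)} {x y : ℕ} :
    (x, y) ∈ rotQ m k t q ↔ (rot m k (rinv k t) x, rot m k (rinv k t) y) ∈ q := by
  constructor
  · rintro h
    rw [rotQ, Finset.mem_image] at h
    obtain ⟨⟨a, b⟩, hab, heq⟩ := h
    have h1 : rot m k t a = x := congrArg Prod.fst heq
    have h2 : rot m k t b = y := congrArg Prod.snd heq
    rw [← h1, ← h2, rot_rinv hk, rot_rinv hk]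
    exact hab
  · intro h
    have := mem_rotQ_of_mem (m := m) (k := k) (t := t) h
    rwa [rinv_rot hk, rinv_rot hk] at this

lemma rotQ_rotQ (hk : 0 < k) (a b : ℕ) (q : Finset (ℕ × ℕ)) :
    rotQ m k a (rotQ m k b q) = rotQ m k (a + b) q := by
  rw [rotQ, rotQ, rotQ, Finset.image_image]
  congr 1
  funext p
  simp [Prod.map, rot_rot hk]

lemma rotQ_of_kdvd (hk : 0 < k) {t : ℕ} (h : k ∣ t) (q : Finset (ℕ × ℕ)) :
    rotQ m k t q = q := by
  rw [rotQ]
  have : Prod.map (rot m k t) (rot m k t) = id := by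
    funext p
    simp [Prod.map, rot_of_kdvd hk h]
  rw [this, Finset.image_id]

lemma rotQ_mod (hk : 0 < k) (t : ℕ) (q : Finset (ℕ × ℕ)) :
    rotQ m k (t % k) q = rotQ m k t q := by
  rw [rotQ, rotQ]
  congr 1
  funext p
  simp [Prod.map, rot_mod hk]


noncomputable def ES (m k : ℕ) : Finset (Finset (ℕ × ℕ)) :=
  ((Finset.Icc 1 (m + k)) ×ˢ (Finset.Icc 1 (m + k))).powerset.filter fun q =>
    IsPOon (Finset.Icc 1 (m + k)) q ∧
      minset (Finset.Icc 1 (m + k)) q = Finset.Icc 1 m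

lemma eSum_eq (m k : ℕ) : eSum m k = (ES m k).card := rfl

lemma mem_S_iff {x : ℕ} : x ∈ Finset.Icc 1 (m + k) ↔ 1 ≤ x ∧ x ≤ m + k := by
  simp [Finset.mem_Icc]

lemma rot_mem_S' (hk : 0 < k) {t x : ℕ} (h : x ∈ Finset.Icc 1 (m + k)) :
    rot m k t x ∈ Finset.Icc 1 (m + k) := by
  rw [mem_S_iff] at h ⊢
  exact rot_mem_S hk h.1 h.2

lemma rotQ_mem_ES (hk : 0 < k) (t : ℕ) {q : Finset (ℕ × ℕ)} (hq : q ∈ ES m k) :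
    rotQ m k t q ∈ ES m k := by
  rw [ES, Finset.mem_filter, Finset.mem_powerset] at hq ⊢
  obtain ⟨hsub, ⟨-, hrefl, htrans, hanti⟩, hmin⟩ := hq
  set S := Finset.Icc 1 (m + k) with hS
  have hSmem : ∀ {x y : ℕ}, (x, y) ∈ q → x ∈ S ∧ y ∈ S := by
    intro x y h
    have := hsub h
    rw [Finset.mem_product] at this
    exact this
  have hsub' : rotQ m k t q ⊆ S ×ˢ S := by
    intro p hp
    rw [rotQ, Finset.mem_image] at hp
    obtain ⟨⟨a, b⟩, hab, rfl⟩ := hp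
    obtain ⟨ha, hb⟩ := hSmem hab
    rw [Finset.mem_product]
    exact ⟨rot_mem_S' hk ha, rot_mem_S' hk hb⟩
  refine ⟨hsub', ⟨hsub', ?_, ?_, ?_⟩, ?_⟩
  · intro x hx
    rw [mem_rotQ_iff hk]
    exact hrefl _ (rot_mem_S' hk hx)
  · intro x y z h1 h2
    rw [mem_rotQ_iff hk] at h1 h2 ⊢
    exact htrans _ _ _ h1 h2
  · intro x y h1 h2
    rw [mem_rotQ_iff hk] at h1 h2
    have := hanti _ _ h1 h2
    exact rot_injective hk _ this
  · ext x
    have key : x ∈ minset S (rotQ m k t q) ↔ rot m k (rinv k t) x ∈ minset S q := by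
      rw [minset, minset, Finset.mem_filter, Finset.mem_filter]
      constructor
      · rintro ⟨hxS, hmin'⟩
        refine ⟨rot_mem_S' hk hxS, ?_⟩
        intro y hy
        have : (rot m k t y, x) ∈ rotQ m k t q := by
          rw [mem_rotQ_iff hk, rot_rinv hk]
          exact hy
        have := hmin' _ this
        rw [← this, rot_rinv hk]
      · rintro ⟨hxS, hmin'⟩
        refine ⟨?_, ?_⟩
        · have := rot_mem_S' (m := m) hk (t := t) hxS
          rwa [rinv_rot hk] at this
        · intro y hy
          rw [mem_rotQ_iff hk] at hy
          have := hmin' _ hy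
          exact rot_injective hk _ this
    rw [key, hmin]
    constructor
    · intro h
      have hx : rot m k (rinv k t) x ≤ m := (Finset.mem_Icc.mp h).2
      have : rot m k t (rot m k (rinv k t) x) = x := rinv_rot hk t x
      rw [rot_of_le hx] at this
      rwa [this] at h
    · intro h
      have hx : x ≤ m := (Finset.mem_Icc.mp h).2
      rwa [rot_of_le hx]


lemma rotQ_all_of_one (hk : 0 < k) {q : Finset (ℕ × ℕ)} (hfix : rotQ m k 1 q = q) :
    ∀ t, rotQ m k t q = q := by
  intro t
  induction t with
  | zero => exact rotQ_of_kdvd hk (dvd_zero k) q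
  | succ n ih =>
    have : rotQ m k (1 + n) q = rotQ m k 1 (rotQ m k n q) := (rotQ_rotQ hk 1 n q).symm
    rw [Nat.add_comm n 1, this, ih, hfix]

noncomputable def FES (m k : ℕ) : Finset (Finset (ℕ × ℕ)) :=
  (ES m k).filter fun q => rotQ m k 1 q = q

section Action

variable (m k : ℕ) [hkp : Fact k.Prime]

instance : NeZero k := ⟨hkp.out.ne_zero⟩

noncomputable instance act : MulAction (Multiplicative (ZMod k)) {q // q ∈ ES m k} where
  smul g q := ⟨rotQ m k (Multiplicative.toAdd g).val q.1, rotQ_mem_ES hkp.out.pos _ q.2⟩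
  one_smul q := by
    apply Subtype.ext
    show rotQ m k (Multiplicative.toAdd (1 : Multiplicative (ZMod k))).val q.1 = q.1
    have h1 : Multiplicative.toAdd (1 : Multiplicative (ZMod k)) = 0 := rfl
    rw [h1, ZMod.val_zero]
    exact rotQ_of_kdvd hkp.out.pos (dvd_zero k) q.1
  mul_smul g h q := by
    apply Subtype.ext
    show rotQ m k (Multiplicative.toAdd (g * h)).val q.1
      = rotQ m k (Multiplicative.toAdd g).val (rotQ m k (Multiplicative.toAdd h).val q.1)
    have h1 : Multiplicative.toAdd (g * h) = Multiplicative.toAdd g + Multiplicative.toAdd h := rfl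
    rw [h1, ZMod.val_add, rotQ_mod hkp.out.pos, rotQ_rotQ hkp.out.pos]

lemma smul_def (g : Multiplicative (ZMod k)) (q : {q // q ∈ ES m k}) :
    (g • q).1 = rotQ m k (Multiplicative.toAdd g).val q.1 := rfl

noncomputable def fixedEquiv :
    MulAction.fixedPoints (Multiplicative (ZMod k)) {q // q ∈ ES m k} ≃ {q // q ∈ FES m k} where
  toFun x := ⟨x.1.1, by
    rw [FES, Finset.mem_filter]
    refine ⟨x.1.2, ?_⟩
    have := x.2 (Multiplicative.ofAdd (1 : ZMod k))
    have h2 := congrArg Subtype.val this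
    rw [smul_def] at h2
    have h3 : (Multiplicative.toAdd (Multiplicative.ofAdd (1 : ZMod k))).val = 1 :=
      ZMod.val_one_eq_one_mod k ▸ Nat.mod_eq_of_lt hkp.out.one_lt
    rwa [h3] at h2⟩
  invFun y := ⟨⟨y.1, (Finset.mem_filter.mp y.2).1⟩, by
    intro g
    apply Subtype.ext
    rw [smul_def]
    exact rotQ_all_of_one hkp.out.pos (Finset.mem_filter.mp y.2).2 _⟩
  left_inv x := by apply Subtype.ext; apply Subtype.ext; rfl
  right_inv y := by apply Subtype.ext; rfl

lemma key_congr : eSum m k ≡ (FES m k).card [MOD k] := by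
  have hpg : IsPGroup k (Multiplicative (ZMod k)) := by
    apply IsPGroup.of_card (n := 1)
    rw [pow_one]
    rw [Nat.card_eq_fintype_card, Fintype.card_multiplicative]
    exact ZMod.card k
  have h := hpg.card_modEq_card_fixedPoints {q // q ∈ ES m k}
  have h1 : Nat.card {q // q ∈ ES m k} = (ES m k).card := by
    rw [Nat.card_eq_fintype_card, Fintype.card_coe]
  have h2 : Nat.card (MulAction.fixedPoints (Multiplicative (ZMod k)) {q // q ∈ ES m k})
      = (FES m k).card := by
    rw [Nat.card_congr (fixedEquiv m k), Nat.card_eq_fintype_card, Fintype.card_coe]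
  rw [h1, h2] at h
  rw [eSum_eq]
  exact h

end Action

section Fixed

variable {q : Finset (ℕ × ℕ)}

/-- In a rotation-invariant poset, the top block is an antichain. -/
lemma K_antichain (hk : 0 < k)
    (hsub : q ⊆ (Finset.Icc 1 (m + k)) ×ˢ (Finset.Icc 1 (m + k)))
    (htrans : ∀ x y z : ℕ, (x, y) ∈ q → (y, z) ∈ q → (x, z) ∈ q)
    (hanti : ∀ x y : ℕ, (x, y) ∈ q → (y, x) ∈ q → x = y)
    (hrot : ∀ t x y, (x, y) ∈ q → (rot m k t x, rot m k t y) ∈ q)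
    {x y : ℕ} (hx : m + 1 ≤ x) (hy : m + 1 ≤ y) (hxy : (x, y) ∈ q) : x = y := by
  have hxyS := hsub hxy
  rw [Finset.mem_product, Finset.mem_Icc, Finset.mem_Icc] at hxyS
  have hxS : x ≤ m + k := hxyS.1.2
  have hyS : y ≤ m + k := hxyS.2.2
  set i := x - (m + 1) with hi
  have h1 := hrot (k - i) _ _ hxy
  rw [rot_of_mem hk hx hxS, rot_of_mem hk hy hyS] at h1
  have e1 : x - (m + 1) + (k - i) = k := by omega
  rw [e1, Nat.mod_self, Nat.add_zero] at h1
  set d := (y - (m + 1) + (k - i)) % k with hd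
  have hdlt : d < k := Nat.mod_lt _ hk
  rcases Nat.eq_zero_or_pos d with hd0 | hdpos
  · -- then rot (k-i) x = rot (k-i) y, so x = y
    apply rot_injective (m := m) hk (k - i)
    rw [rot_of_mem hk hx hxS, rot_of_mem hk hy hyS, e1, Nat.mod_self, ← hd, hd0]
  · exfalso
    have hchain : ∀ n : ℕ, (m + 1, m + 1 + ((n + 1) * d) % k) ∈ q := by
      intro n
      induction n with
      | zero => simpa [Nat.mod_eq_of_lt hdlt] using h1
      | succ n ih =>
        have h2 := hrot ((n + 1) * d) _ _ h1
        rw [rot_of_mem hk (le_refl (m + 1)) (by omega),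
          rot_of_mem hk (by omega : m + 1 ≤ m + 1 + d) (by omega : m + 1 + d ≤ m + k)] at h2
        have e2 : m + 1 - (m + 1) + (n + 1) * d = (n + 1) * d := by omega
        have e3 : m + 1 + d - (m + 1) + (n + 1) * d = (n + 1) * d + d := by omega
        rw [e2, e3] at h2
        have e4 : (n + 1 + 1) * d = (n + 1) * d + d := by ring
        rw [e4]
        exact htrans _ _ _ ih h2
    have hk2 : 2 ≤ k := by omega
    have e5 : k - 2 + 1 = k - 1 := by omega
    have h4 := hrot d _ _ (hchain (k - 2))
    rw [e5] at h4
    have hlt2 : ((k - 1) * d) % k < k := Nat.mod_lt _ hk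
    rw [rot_of_mem hk (le_refl (m + 1)) (by omega), rot_of_mem hk (by omega) (by omega)] at h4
    have e6 : m + 1 - (m + 1) + d = d := by omega
    have e7 : m + 1 + (k - 1) * d % k - (m + 1) = (k - 1) * d % k := by omega
    rw [e6, Nat.mod_eq_of_lt hdlt, e7] at h4
    have e8 : ((k - 1) * d % k + d) % k = 0 := by
      rw [Nat.mod_add_mod]
      have e9 : (k - 1) * d + d = k * d := by
        have h10 : d ≤ k * d := Nat.le_mul_of_pos_left d hk
        rw [Nat.sub_one_mul]
        omega
      rw [e9, Nat.mul_mod_right]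
    rw [e8, Nat.add_zero] at h4
    have := hanti _ _ h1 h4
    omega


/-- each bottom element relates to all-or-none of the top block -/
lemma MK_all (hk : 0 < k)
    (hrot : ∀ t x y, (x, y) ∈ q → (rot m k t x, rot m k t y) ∈ q)
    {a j : ℕ} (ha : a ≤ m) (hj : j < k) : (a, m + 1) ∈ q ↔ (a, m + 1 + j) ∈ q := by
  constructor
  · intro h
    have h1 := hrot j _ _ h
    rw [rot_of_le ha, rot_of_mem hk (le_refl (m + 1)) (by omega)] at h1
    have e1 : m + 1 - (m + 1) + j = j := by omega
    rwa [e1, Nat.mod_eq_of_lt hj] at h1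
  · intro h
    have h1 := hrot (k - j) _ _ h
    rw [rot_of_le ha, rot_of_mem hk (by omega : m + 1 ≤ m + 1 + j) (by omega)] at h1
    have e1 : m + 1 + j - (m + 1) + (k - j) = k := by omega
    rwa [e1, Nat.mod_self, Nat.add_zero] at h1

end Fixed

/-- The canonical fixed poset attached to a set `T` of bottom elements. -/
noncomputable def QT (m k : ℕ) (T : Finset ℕ) : Finset (ℕ × ℕ) :=
  ((Finset.Icc 1 (m + k)).image fun x => (x, x)) ∪ T ×ˢ Finset.Icc (m + 1) (m + k)

lemma mem_QT {T : Finset ℕ} {x y : ℕ} :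
    (x, y) ∈ QT m k T ↔ (x ∈ Finset.Icc 1 (m + k) ∧ x = y) ∨
      (x ∈ T ∧ y ∈ Finset.Icc (m + 1) (m + k)) := by
  rw [QT, Finset.mem_union, Finset.mem_image, Finset.mem_product]
  constructor
  · rintro (⟨a, ha, heq⟩ | h)
    · left
      have h1 : a = x := congrArg Prod.fst heq
      have h2 : a = y := congrArg Prod.snd heq
      exact ⟨h1 ▸ ha, by omega⟩
    · right; exact h
  · rintro (⟨hx, rfl⟩ | h)
    · exact Or.inl ⟨x, hx, rfl⟩
    · exact Or.inr h

lemma QT_mem_FES (hk : 0 < k) {T : Finset ℕ} (hT : T ⊆ Finset.Icc 1 m) (hne : T.Nonempty) :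
    QT m k T ∈ FES m k := by
  have hTm : ∀ a ∈ T, 1 ≤ a ∧ a ≤ m := by
    intro a ha; have := hT ha; rw [Finset.mem_Icc] at this; exact this
  have hsub : QT m k T ⊆ (Finset.Icc 1 (m + k)) ×ˢ (Finset.Icc 1 (m + k)) := by
    rintro ⟨x, y⟩ h
    rw [mem_QT] at h
    rw [Finset.mem_product, Finset.mem_Icc, Finset.mem_Icc]
    rcases h with ⟨hx, rfl⟩ | ⟨hx, hy⟩
    · rw [Finset.mem_Icc] at hx; exact ⟨hx, hx⟩
    · have := hTm _ hx
      rw [Finset.mem_Icc] at hy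
      constructor <;> omega
  have hmaps : ∀ t x y, (x, y) ∈ QT m k T → (rot m k t x, rot m k t y) ∈ QT m k T := by
    intro t x y h
    rw [mem_QT] at h ⊢
    rcases h with ⟨hx, rfl⟩ | ⟨hx, hy⟩
    · exact Or.inl ⟨rot_mem_S' hk hx, rfl⟩
    · refine Or.inr ⟨?_, ?_⟩
      · have := hTm _ hx
        rwa [rot_of_le (by omega)]
      · rw [Finset.mem_Icc] at hy ⊢
        exact rot_mem hk hy.1 hy.2
  rw [FES, Finset.mem_filter, ES, Finset.mem_filter, Finset.mem_powerset]
  refine ⟨⟨hsub, ⟨hsub, ?_, ?_, ?_⟩, ?_⟩, ?_⟩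
  · -- reflexivity
    intro x hx
    rw [mem_QT]
    exact Or.inl ⟨hx, rfl⟩
  · -- transitivity
    intro x y z h1 h2
    rw [mem_QT] at h1 h2 ⊢
    rcases h1 with ⟨hx, rfl⟩ | ⟨hx, hy⟩
    · exact h2
    · rcases h2 with ⟨hy', rfl⟩ | ⟨hy', hz⟩
      · exact Or.inr ⟨hx, hy⟩
      · -- y ∈ K and y ∈ T : impossible
        exfalso
        have h3 := hTm _ hy'
        rw [Finset.mem_Icc] at hy
        omega
  · -- antisymmetry
    intro x y h1 h2
    rw [mem_QT] at h1 h2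
    rcases h1 with ⟨hx, rfl⟩ | ⟨hx, hy⟩
    · rfl
    · rcases h2 with ⟨hy', heq⟩ | ⟨hy', hx'⟩
      · omega
      · exfalso
        have h3 := hTm _ hy'
        rw [Finset.mem_Icc] at hy
        omega
  · -- minset
    ext a
    simp only [minset, Finset.mem_filter, Finset.mem_Icc]
    constructor
    · rintro ⟨haS, hmin'⟩
      by_contra hc
      have ha1 : m + 1 ≤ a := by omega
      obtain ⟨b, hb⟩ := hne
      have hba : (b, a) ∈ QT m k T := by
        rw [mem_QT]
        exact Or.inr ⟨hb, by rw [Finset.mem_Icc]; omega⟩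
      have := hmin' _ hba
      have := hTm _ hb
      omega
    · intro ha
      refine ⟨by omega, ?_⟩
      intro y hy
      rw [mem_QT] at hy
      rcases hy with ⟨hyS, rfl⟩ | ⟨hyT, haK⟩
      · rfl
      · rw [Finset.mem_Icc] at haK
        omega
  · -- fixedness
    have hsubset : rotQ m k 1 (QT m k T) ⊆ QT m k T := by
      intro p hp
      rw [rotQ, Finset.mem_image] at hp
      obtain ⟨⟨a, b⟩, hab, rfl⟩ := hp
      exact hmaps 1 a b hab
    apply Finset.eq_of_subset_of_card_le hsubset
    rw [rotQ, Finset.card_image_of_injective]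
    exact Function.Injective.prodMap (rot_injective hk 1) (rot_injective hk 1)

lemma FES_structure (hk : 0 < k) {q : Finset (ℕ × ℕ)} (hq : q ∈ FES m k) :
    ∃ T, T ⊆ Finset.Icc 1 m ∧ T.Nonempty ∧ QT m k T = q := by
  rw [FES, Finset.mem_filter, ES, Finset.mem_filter, Finset.mem_powerset] at hq
  obtain ⟨⟨hsub, ⟨-, hrefl, htrans, hanti⟩, hmin⟩, hfix⟩ := hq
  have hrotall := rotQ_all_of_one hk hfix
  have hrot : ∀ t x y, (x, y) ∈ q → (rot m k t x, rot m k t y) ∈ q := by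
    intro t x y h
    have := mem_rotQ_of_mem (m := m) (k := k) (t := t) h
    rwa [hrotall t] at this
  have hminmem : ∀ a : ℕ, (1 ≤ a ∧ a ≤ m) ↔
      ((1 ≤ a ∧ a ≤ m + k) ∧ ∀ y, (y, a) ∈ q → y = a) := by
    intro a
    rw [← Finset.mem_Icc, ← hmin, minset, Finset.mem_filter, Finset.mem_Icc]
  refine ⟨(Finset.Icc 1 m).filter (fun a => (a, m + 1) ∈ q), Finset.filter_subset _ _, ?_, ?_⟩
  · have h1 : ¬ (1 ≤ m + 1 ∧ m + 1 ≤ m) := by omega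
    rw [hminmem (m + 1)] at h1
    push_neg at h1
    obtain ⟨y, hy, hne⟩ := h1 ⟨by omega, by omega⟩
    have hyS := hsub hy
    rw [Finset.mem_product, Finset.mem_Icc, Finset.mem_Icc] at hyS
    have hySm : y ≤ m := by
      by_contra hc
      exact hne (K_antichain hk hsub htrans hanti hrot (by omega) (by omega) hy)
    exact ⟨y, Finset.mem_filter.mpr ⟨Finset.mem_Icc.mpr ⟨hyS.1.1, hySm⟩, hy⟩⟩
  · ext ⟨x, y⟩
    rw [mem_QT, Finset.mem_filter]
    constructor
    · rintro (⟨hx, rfl⟩ | ⟨⟨hxM, hx1⟩, hy⟩)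
      · exact hrefl _ hx
      · rw [Finset.mem_Icc] at hxM hy
        have hj : y - (m + 1) < k := by omega
        have h2 := (MK_all hk hrot hxM.2 hj).mp hx1
        have e : m + 1 + (y - (m + 1)) = y := by omega
        rwa [e] at h2
    · intro hxy
      have hS := hsub hxy
      rw [Finset.mem_product, Finset.mem_Icc, Finset.mem_Icc] at hS
      by_cases hy : y ≤ m
      · have h2 : x = y := ((hminmem y).mp ⟨hS.2.1, hy⟩).2 _ hxy
        exact Or.inl ⟨Finset.mem_Icc.mpr hS.1, h2⟩
      · by_cases hx : x ≤ m
        · right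
          have hj : y - (m + 1) < k := by omega
          have e : m + 1 + (y - (m + 1)) = y := by omega
          have h3 : (x, m + 1 + (y - (m + 1))) ∈ q := by rw [e]; exact hxy
          have h4 : (x, m + 1) ∈ q := (MK_all hk hrot hx hj).mpr h3
          exact ⟨⟨Finset.mem_Icc.mpr ⟨hS.1.1, hx⟩, h4⟩,
            Finset.mem_Icc.mpr ⟨by omega, hS.2.2⟩⟩
        · left
          exact ⟨Finset.mem_Icc.mpr hS.1,
            K_antichain hk hsub htrans hanti hrot (by omega) (by omega) hxy⟩

lemma card_FES (hk : 0 < k) : (FES m k).card = 2 ^ m - 1 := by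
  have hA : ((Finset.Icc 1 m).powerset.filter Finset.Nonempty).card = 2 ^ m - 1 := by
    have h1 : (Finset.Icc 1 m).powerset.filter Finset.Nonempty
        = (Finset.Icc 1 m).powerset.erase ∅ := by
      ext T
      simp [Finset.mem_filter, Finset.mem_erase, Finset.nonempty_iff_ne_empty, and_comm]
    rw [h1, Finset.card_erase_of_mem (Finset.empty_mem_powerset _), Finset.card_powerset,
      Nat.card_Icc]
    simp
  rw [← hA]
  refine (Finset.card_bij (fun T _ => QT m k T) ?_ ?_ ?_).symm
  · intro T hT
    rw [Finset.mem_filter, Finset.mem_powerset] at hT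
    exact QT_mem_FES hk hT.1 hT.2
  · intro T1 h1 T2 h2 heq
    rw [Finset.mem_filter, Finset.mem_powerset] at h1 h2
    have key : ∀ T : Finset ℕ, T ⊆ Finset.Icc 1 m →
        ∀ a, a ∈ T ↔ (a ∈ Finset.Icc 1 m ∧ (a, m + 1) ∈ QT m k T) := by
      intro T hT a
      rw [mem_QT]
      constructor
      · intro ha
        exact ⟨hT ha, Or.inr ⟨ha, Finset.mem_Icc.mpr ⟨le_refl _, by omega⟩⟩⟩
      · rintro ⟨haM, (⟨h, heq'⟩ | ⟨h, -⟩)⟩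
        · rw [Finset.mem_Icc] at haM; omega
        · exact h
    have heq2 : QT m k T1 = QT m k T2 := heq
    ext a
    rw [key T1 h1.1 a, key T2 h2.1 a, heq2]
  · intro q hq
    obtain ⟨T, hT, hne, heq⟩ := FES_structure hk hq
    exact ⟨T, Finset.mem_filter.mpr ⟨Finset.mem_powerset.mpr hT, hne⟩, heq⟩

end S18

/-- Theorem 6.6: if `k` is prime, then `k` divides `e_k(m) − 2^{mk} − (−1)^k`. -/
theorem stmt_18 (m k : ℕ) (hk : k.Prime) :
    (k : ℤ) ∣ (eSum m k : ℤ) - 2 ^ (m * k) - (-1) ^ k := by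
  haveI : Fact k.Prime := ⟨hk⟩
  have h1 : eSum m k ≡ 2 ^ m - 1 [MOD k] := by
    rw [← S18.card_FES (m := m) hk.pos]
    exact S18.key_congr m k
  have h2 : ((eSum m k : ℕ) : ZMod k) = ((2 ^ m - 1 : ℕ) : ZMod k) :=
    (ZMod.natCast_eq_natCast_iff _ _ _).mpr h1
  have hone : (1 : ℕ) ≤ 2 ^ m := Nat.one_le_two_pow
  rw [Nat.cast_sub hone] at h2
  push_cast at h2
  rw [← ZMod.intCast_zmod_eq_zero_iff_dvd]
  push_cast
  rw [h2, pow_mul, ZMod.pow_card, ZMod.pow_card]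
  ring
end

section
/- Let M and K be disjoint finite sets with #M = m ≥ 1, let P be a partial order on K, and let Q ∈ E(M,P). Then d(Q) = Σ_{D} 2^{#(M ∖ QD)}, where the sum ranges over all downsets D of P and QD denotes the down-closure of D in Q; moreover d(Q) ≤ 2^{m−1} · (d(P) + 1), and equality holds exactly when Q is isomorphic to A_{m−1} + (A_1 ⊕ P), the disjoint sum of an (m−1)-element antichain with the poset obtained by adjoining one element below all of P. -/
/-!
Intersecting with `K` sends each downset of `Q` to a downset `D` of `P`, and since the elements
of `M` are minimal, the downsets of `Q` over `D` are exactly `QD ∪ T` with `T ⊆ M ∖ QD`; this is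
the sum formula. The term of `D = ∅` is `2^m`, and every element of `K` lies above an element of
`M`, so each of the other `d(P) - 1` terms is at most `2^{m-1}`. Equality forces
`#(M ∩ QD) = 1` for every nonempty `D`; already for `D = K` this says that a single `a ∈ M` lies
below elements of `K`, hence below all of them, which is the order `A_{m-1} + (A_1 ⊕ P)`.
-/

open scoped Classical

variable {α : Type*} [DecidableEq α]

open Finset

section Downsets

variable {β : Type*} {S A D E : Finset β} {q : Finset (β × β)}

lemma mem_downsets :
    D ∈ downsets S q ↔ D ⊆ S ∧ ∀ y ∈ D, ∀ x, (x, y) ∈ q → x ∈ D := by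
  simp [downsets]

lemma empty_mem_downsets (S : Finset β) (q : Finset (β × β)) : ∅ ∈ downsets S q := by
  simp [mem_downsets]

lemma one_le_dnum (S : Finset β) (q : Finset (β × β)) : 1 ≤ dnum S q :=
  card_pos.2 ⟨∅, empty_mem_downsets S q⟩

lemma dnum_eq_of_POIso {γ : Type*} [DecidableEq γ] {T : Finset γ} {r : Finset (γ × γ)}
    (hqS : q ⊆ S ×ˢ S) (hrT : r ⊆ T ×ˢ T) (hiso : POIso S q T r) : dnum S q = dnum T r := by
  obtain ⟨f, hf, hfq⟩ := hiso
  refine card_nbij' (·.image f) (fun E => S.filter (f · ∈ E)) ?_ ?_ ?_ ?_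
  · intro D hD
    obtain ⟨hDS, hD⟩ := mem_downsets.1 hD
    refine mem_downsets.2 ⟨fun y hy => ?_, fun y hy x hxy => ?_⟩
    · obtain ⟨d, hd, rfl⟩ := mem_image.1 hy
      exact hf.mapsTo (hDS hd)
    · obtain ⟨d, hd, rfl⟩ := mem_image.1 hy
      obtain ⟨x, hxS, rfl⟩ := hf.surjOn (mem_product.1 (hrT hxy)).1
      exact mem_image_of_mem f (hD d hd x ((hfq x hxS d (hDS hd)).2 hxy))
  · intro E hE
    obtain ⟨-, hE⟩ := mem_downsets.1 hE
    refine mem_downsets.2 ⟨filter_subset _ _, fun y hy x hxy => ?_⟩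
    obtain ⟨hyS, hyE⟩ := mem_filter.1 hy
    have hxS := (mem_product.1 (hqS hxy)).1
    exact mem_filter.2 ⟨hxS, hE _ hyE _ ((hfq x hxS y hyS).1 hxy)⟩
  · intro D hD
    have hDS := (mem_downsets.1 hD).1
    ext x
    simp only [mem_filter, mem_image]
    refine ⟨fun ⟨hxS, d, hd, hdx⟩ => hf.injOn (hDS hd) hxS hdx ▸ hd,
      fun hx => ⟨hDS hx, x, hx, rfl⟩⟩
  · intro E hE
    have hET := (mem_downsets.1 hE).1
    ext y
    simp only [mem_image, mem_filter]
    refine ⟨fun ⟨x, ⟨_, hx⟩, hxy⟩ => hxy ▸ hx, fun hy => ?_⟩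
    obtain ⟨x, hxS, rfl⟩ := hf.surjOn (hET hy)
    exact ⟨x, ⟨hxS, hy⟩, rfl⟩

variable [DecidableEq β]

lemma mem_dcl {x : β} : x ∈ dcl q A ↔ ∃ a ∈ A, (x, a) ∈ q := by
  simp [dcl, and_comm]

@[simp] lemma dcl_empty (q : Finset (β × β)) : dcl q ∅ = ∅ := by
  ext; simp [mem_dcl]

lemma subset_dcl (hrefl : ∀ x ∈ S, (x, x) ∈ q) (hA : A ⊆ S) : A ⊆ dcl q A :=
  fun x hx => mem_dcl.2 ⟨x, hx, hrefl x (hA hx)⟩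

lemma union_mem_downsets (hD : D ∈ downsets S q) (hE : E ∈ downsets S q) :
    D ∪ E ∈ downsets S q := by
  rw [mem_downsets] at *
  refine ⟨union_subset hD.1 hE.1, fun y hy x hxy => ?_⟩
  rcases mem_union.1 hy with hy | hy
  · exact mem_union_left _ (hD.2 y hy x hxy)
  · exact mem_union_right _ (hE.2 y hy x hxy)

lemma dcl_subset_of_mem_downsets (hD : D ∈ downsets S q) (hA : A ⊆ D) : dcl q A ⊆ D := by
  intro x hx
  obtain ⟨a, ha, hxa⟩ := mem_dcl.1 hx
  exact (mem_downsets.1 hD).2 a (hA ha) x hxa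

lemma dcl_mem_downsets (hqS : q ⊆ S ×ˢ S)
    (htrans : ∀ x y z, (x, y) ∈ q → (y, z) ∈ q → (x, z) ∈ q) : dcl q A ∈ downsets S q := by
  refine mem_downsets.2 ⟨fun x hx => ?_, fun y hy x hxy => ?_⟩
  · obtain ⟨a, -, hxa⟩ := mem_dcl.1 hx
    exact (mem_product.1 (hqS hxa)).1
  · obtain ⟨a, ha, hya⟩ := mem_dcl.1 hy
    exact mem_dcl.2 ⟨a, ha, htrans x y a hxy hya⟩

lemma mul_dnum_add_one (S : Finset β) (q : Finset (β × β)) (c : ℕ) :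
    c * (dnum S q + 1) = c * 2 + ∑ _D ∈ (downsets S q).erase ∅, c := by
  rw [sum_const, card_erase_of_mem (empty_mem_downsets S q), smul_eq_mul, ← dnum]
  have := one_le_dnum S q
  rw [← mul_comm c, ← mul_add]
  congr 1
  omega

end Downsets

/-- `q ∈ extPOs M K p` with `M`, `K` disjoint, unbundled into named fields. -/
structure IsMinExt (M K : Finset α) (p q : Finset (α × α)) : Prop where
  disjoint : Disjoint M K
  subset : q ⊆ (M ∪ K) ×ˢ (M ∪ K)
  refl : ∀ x ∈ M ∪ K, (x, x) ∈ q
  trans : ∀ x y z, (x, y) ∈ q → (y, z) ∈ q → (x, z) ∈ q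
  antisymm : ∀ x y, (x, y) ∈ q → (y, x) ∈ q → x = y
  restrictRel_eq : restrictRel q K = p
  minset_eq : minset (M ∪ K) q = M

namespace IsMinExt

variable {M K D : Finset α} {p q : Finset (α × α)}

lemma of_mem_extPOs (hMK : Disjoint M K) (hq : q ∈ extPOs M K p) : IsMinExt M K p q := by
  obtain ⟨-, ⟨hsub, hrefl, htrans, hanti⟩, hres, hmin⟩ := mem_filter.1 hq
  exact ⟨hMK, hsub, hrefl, htrans, hanti, hres, hmin⟩

lemma mem_p_iff (h : IsMinExt M K p q) {x y : α} :
    (x, y) ∈ p ↔ (x, y) ∈ q ∧ x ∈ K ∧ y ∈ K := by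
  rw [← h.restrictRel_eq, restrictRel, mem_filter]

lemma eq_of_le_of_mem_M (h : IsMinExt M K p q) {a x : α} (ha : a ∈ M) (hxa : (x, a) ∈ q) :
    x = a := by
  rw [← h.minset_eq, minset, mem_filter] at ha
  exact ha.2 x hxa

lemma exists_mem_M_le (h : IsMinExt M K p q) {x : α} (hx : x ∈ M ∪ K) :
    ∃ a ∈ M, (a, x) ∈ q := by
  induction hn : (dcl q {x}).card using Nat.strong_induction_on generalizing x with
  | _ n ih =>
    by_cases hmin : ∀ y, (y, x) ∈ q → y = x
    · exact ⟨x, h.minset_eq ▸ mem_filter.2 ⟨hx, hmin⟩, h.refl x hx⟩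
    obtain ⟨y, hyx, hne⟩ := not_forall₂.1 hmin
    -- `x` lies below `x` but not below `y`
    have hlt : (dcl q {y}).card < n := by
      refine hn ▸ card_lt_card ((ssubset_iff_of_subset fun z hz => ?_).2 ⟨x, ?_, fun hx' => ?_⟩)
      · simp only [mem_dcl, mem_singleton, exists_eq_left] at hz ⊢
        exact h.trans _ _ _ hz hyx
      · simpa [mem_dcl] using h.refl x hx
      · simp only [mem_dcl, mem_singleton, exists_eq_left] at hx'
        exact hne (h.antisymm _ _ hyx hx')
    obtain ⟨a, ha, hay⟩ := ih _ hlt (mem_product.1 (h.subset hyx)).1 rfl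
    exact ⟨a, ha, h.trans _ _ _ hay hyx⟩

lemma subset_mem_downsets (h : IsMinExt M K p q) {T : Finset α} (hT : T ⊆ M) :
    T ∈ downsets (M ∪ K) q :=
  mem_downsets.2 ⟨hT.trans subset_union_left,
    fun _ hy _ hxy => h.eq_of_le_of_mem_M (hT hy) hxy ▸ hy⟩

lemma dcl_inter_eq (h : IsMinExt M K p q) (hD : D ∈ downsets K p) : dcl q D ∩ K = D := by
  obtain ⟨hDK, hD⟩ := mem_downsets.1 hD
  ext x
  refine ⟨fun hx => ?_, fun hx =>
    mem_inter.2 ⟨subset_dcl h.refl (hDK.trans subset_union_right) hx, hDK hx⟩⟩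
  obtain ⟨hx, hxK⟩ := mem_inter.1 hx
  obtain ⟨d, hd, hxd⟩ := mem_dcl.1 hx
  exact hD d hd x (h.mem_p_iff.2 ⟨hxd, hxK, hDK hd⟩)

lemma inter_mem_downsets (h : IsMinExt M K p q) {D' : Finset α}
    (hD' : D' ∈ downsets (M ∪ K) q) : D' ∩ K ∈ downsets K p := by
  refine mem_downsets.2 ⟨inter_subset_right, fun y hy x hxy => ?_⟩
  obtain ⟨hxy, hxK, -⟩ := h.mem_p_iff.1 hxy
  exact mem_inter.2 ⟨(mem_downsets.1 hD').2 y (mem_inter.1 hy).1 x hxy, hxK⟩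

lemma card_filter_inter_eq (h : IsMinExt M K p q) (hD : D ∈ downsets K p) :
    ((downsets (M ∪ K) q).filter (· ∩ K = D)).card = 2 ^ (M \ dcl q D).card := by
  have hDdcl : D ⊆ dcl q D :=
    subset_dcl h.refl ((mem_downsets.1 hD).1.trans subset_union_right)
  have hdcl : dcl q D ∈ downsets (M ∪ K) q := dcl_mem_downsets h.subset h.trans
  rw [← card_powerset]
  refine card_nbij' (· \ dcl q D) (dcl q D ∪ ·) ?_ ?_ ?_ ?_
  · intro D' hD'
    obtain ⟨hD', hD'K⟩ := mem_filter.1 hD'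
    refine mem_powerset.2 fun x hx => ?_
    obtain ⟨hxD', hxD⟩ := mem_sdiff.1 hx
    refine mem_sdiff.2 ⟨?_, hxD⟩
    rcases mem_union.1 ((mem_downsets.1 hD').1 hxD') with hxM | hxK
    · exact hxM
    · exact absurd (hDdcl (hD'K ▸ mem_inter.2 ⟨hxD', hxK⟩)) hxD
  · intro T hT
    have hTM : T ⊆ M := (mem_powerset.1 hT).trans sdiff_subset
    refine mem_filter.2 ⟨union_mem_downsets hdcl (h.subset_mem_downsets hTM), ?_⟩
    rw [union_inter_distrib_right, h.dcl_inter_eq hD,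
      disjoint_iff_inter_eq_empty.1 (h.disjoint.mono_left hTM), union_empty]
  · intro D' hD'
    obtain ⟨hD', hD'K⟩ := mem_filter.1 hD'
    exact union_sdiff_of_subset
      (dcl_subset_of_mem_downsets hD' (hD'K ▸ inter_subset_left))
  · intro T hT
    exact union_sdiff_cancel_left (disjoint_of_subset_right (mem_powerset.1 hT) disjoint_sdiff)

lemma dnum_eq_sum (h : IsMinExt M K p q) :
    dnum (M ∪ K) q = ∑ D ∈ downsets K p, 2 ^ (M \ dcl q D).card := by
  rw [dnum, card_eq_sum_card_fiberwise fun D' hD' => h.inter_mem_downsets hD']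
  exact sum_congr rfl fun D hD => h.card_filter_inter_eq hD

lemma card_sdiff_dcl_lt (h : IsMinExt M K p q) (hDK : D ⊆ K) (hD : D.Nonempty) :
    (M \ dcl q D).card < M.card := by
  obtain ⟨k, hk⟩ := hD
  obtain ⟨a, ha, hak⟩ := h.exists_mem_M_le (mem_union_right _ (hDK hk))
  exact card_lt_card ((ssubset_iff_of_subset sdiff_subset).2
    ⟨a, ha, fun haD => (mem_sdiff.1 haD).2 (mem_dcl.2 ⟨k, hk, hak⟩)⟩)

lemma dnum_eq_add_sum (h : IsMinExt M K p q) :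
    dnum (M ∪ K) q = 2 ^ M.card + ∑ D ∈ (downsets K p).erase ∅, 2 ^ (M \ dcl q D).card := by
  rw [h.dnum_eq_sum, ← add_sum_erase _ _ (empty_mem_downsets K p), dcl_empty, sdiff_empty]

lemma pow_le_of_mem_erase (h : IsMinExt M K p q) (hD : D ∈ (downsets K p).erase ∅) :
    2 ^ (M \ dcl q D).card ≤ 2 ^ (M.card - 1) := by
  obtain ⟨hne, hD⟩ := mem_erase.1 hD
  have := h.card_sdiff_dcl_lt (mem_downsets.1 hD).1 (nonempty_iff_ne_empty.2 hne)
  exact Nat.pow_le_pow_right two_pos (by omega)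

lemma dnum_le (h : IsMinExt M K p q) :
    dnum (M ∪ K) q ≤ 2 ^ (M.card - 1) * (dnum K p + 1) := by
  rw [h.dnum_eq_add_sum, mul_dnum_add_one]
  refine add_le_add ?_ (sum_le_sum fun D hD => h.pow_le_of_mem_erase hD)
  rw [← pow_succ]
  exact Nat.pow_le_pow_right two_pos (by omega)

lemma dnum_eq_iff (h : IsMinExt M K p q) (hm : 1 ≤ M.card) :
    dnum (M ∪ K) q = 2 ^ (M.card - 1) * (dnum K p + 1) ↔
      ∀ D ∈ (downsets K p).erase ∅, (M \ dcl q D).card = M.card - 1 := by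
  have hpow : 2 ^ (M.card - 1) * 2 = 2 ^ M.card := by
    rw [← pow_succ, Nat.sub_add_cancel hm]
  rw [h.dnum_eq_add_sum, mul_dnum_add_one, hpow, add_right_inj]
  refine (sum_eq_sum_iff_of_le fun D hD => h.pow_le_of_mem_erase hD).trans ?_
  exact forall₂_congr fun D _ => Nat.pow_right_injective le_rfl |>.eq_iff

end IsMinExt

/-- The order of `A_{m-1} + (A_1 ⊕ P)` on `M ∪ K`, where `a ∈ M` is the element below `K`. -/
def extremalRel (M K : Finset α) (p : Finset (α × α)) (a : α) : Finset (α × α) :=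
  ((M ∪ K).image fun x => (x, x)) ∪ p ∪ (({a} : Finset α) ×ˢ K)

section Extremal

variable {M K D : Finset α} {p : Finset (α × α)} {a x y z : α}

lemma mem_extremalRel : (x, y) ∈ extremalRel M K p a ↔
    (x = y ∧ x ∈ M ∪ K) ∨ (x, y) ∈ p ∨ (x = a ∧ y ∈ K) := by
  simp only [extremalRel, mem_union, mem_image, mem_product, mem_singleton, Prod.mk.injEq]
  constructor
  · rintro ((⟨z, hz, rfl, rfl⟩ | hp) | hak)
    exacts [Or.inl ⟨rfl, hz⟩, Or.inr (Or.inl hp), Or.inr (Or.inr hak)]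
  · rintro (⟨rfl, hx⟩ | hp | hak)
    exacts [Or.inl (Or.inl ⟨x, hx, rfl, rfl⟩), Or.inl (Or.inr hp), Or.inr hak]

lemma extremalRel_subset (hpK : p ⊆ K ×ˢ K) (ha : a ∈ M) :
    extremalRel M K p a ⊆ (M ∪ K) ×ˢ (M ∪ K) := by
  rintro ⟨x, y⟩ hxy
  rcases mem_extremalRel.1 hxy with ⟨rfl, hx⟩ | hxy | ⟨rfl, hy⟩
  · exact mem_product.2 ⟨hx, hx⟩
  · obtain ⟨hx, hy⟩ := mem_product.1 (hpK hxy)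
    exact mem_product.2 ⟨mem_union_right _ hx, mem_union_right _ hy⟩
  · exact mem_product.2 ⟨mem_union_left _ ha, mem_union_right _ hy⟩

lemma extremalRel_trans (hp : IsPOon K p) (haK : a ∉ K) (hxy : (x, y) ∈ extremalRel M K p a)
    (hyz : (y, z) ∈ extremalRel M K p a) : (x, z) ∈ extremalRel M K p a := by
  rcases mem_extremalRel.1 hxy with ⟨rfl, -⟩ | hxy' | ⟨hxa, hy⟩
  · exact hyz
  · rcases mem_extremalRel.1 hyz with ⟨rfl, -⟩ | hyz' | ⟨rfl, -⟩
    · exact hxy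
    · exact mem_extremalRel.2 (Or.inr (Or.inl (hp.2.2.1 _ _ _ hxy' hyz')))
    · exact absurd (mem_product.1 (hp.1 hxy')).2 haK
  · rcases mem_extremalRel.1 hyz with ⟨rfl, -⟩ | hyz' | ⟨rfl, -⟩
    · exact hxy
    · exact mem_extremalRel.2 (Or.inr (Or.inr ⟨hxa, (mem_product.1 (hp.1 hyz')).2⟩))
    · exact absurd hy haK

lemma extremalRel_antisymm (hp : IsPOon K p) (haK : a ∉ K) (hxy : (x, y) ∈ extremalRel M K p a)
    (hyx : (y, x) ∈ extremalRel M K p a) : x = y := by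
  rcases mem_extremalRel.1 hxy with ⟨rfl, -⟩ | hxy' | ⟨rfl, hy⟩
  · rfl
  · rcases mem_extremalRel.1 hyx with ⟨rfl, -⟩ | hyx' | ⟨rfl, -⟩
    · rfl
    · exact hp.2.2.2 _ _ hxy' hyx'
    · exact absurd (mem_product.1 (hp.1 hxy')).2 haK
  · rcases mem_extremalRel.1 hyx with ⟨rfl, -⟩ | hyx' | ⟨-, hx⟩
    · rfl
    · exact absurd (mem_product.1 (hp.1 hyx')).2 haK
    · exact absurd hx haK

lemma restrictRel_extremalRel (hp : IsPOon K p) (haK : a ∉ K) :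
    restrictRel (extremalRel M K p a) K = p := by
  ext ⟨x, y⟩
  rw [restrictRel, mem_filter, mem_extremalRel]
  constructor
  · rintro ⟨⟨rfl, -⟩ | hxy | ⟨rfl, -⟩, hx, -⟩
    exacts [hp.2.1 x hx, hxy, absurd hx haK]
  · exact fun hxy => ⟨Or.inr (Or.inl hxy), mem_product.1 (hp.1 hxy)⟩

lemma minset_extremalRel (hMK : Disjoint M K) (hpK : p ⊆ K ×ˢ K) (haK : a ∉ K) :
    minset (M ∪ K) (extremalRel M K p a) = M := by
  ext x
  rw [minset, mem_filter, mem_union]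
  constructor
  · rintro ⟨hx | hx, hmin⟩
    · exact hx
    · exact absurd (hmin a (mem_extremalRel.2 (Or.inr (Or.inr ⟨rfl, hx⟩))) ▸ hx) haK
  · refine fun hx => ⟨Or.inl hx, fun y hyx => ?_⟩
    have hxK : x ∉ K := disjoint_left.1 hMK hx
    rcases mem_extremalRel.1 hyx with ⟨rfl, -⟩ | hyx | ⟨-, hx⟩
    exacts [rfl, absurd (mem_product.1 (hpK hyx)).2 hxK, absurd hx hxK]

lemma isMinExt_extremalRel (hMK : Disjoint M K) (hp : IsPOon K p) (ha : a ∈ M) :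
    IsMinExt M K p (extremalRel M K p a) :=
  have haK : a ∉ K := disjoint_left.1 hMK ha
  ⟨hMK, extremalRel_subset hp.1 ha, fun _ hx => mem_extremalRel.2 (Or.inl ⟨rfl, hx⟩),
    fun _ _ _ => extremalRel_trans hp haK, fun _ _ => extremalRel_antisymm hp haK,
    restrictRel_extremalRel hp haK, minset_extremalRel hMK hp.1 haK⟩

lemma sdiff_dcl_extremalRel (hMK : Disjoint M K) (hpK : p ⊆ K ×ˢ K) (hDK : D ⊆ K)
    (hD : D.Nonempty) : M \ dcl (extremalRel M K p a) D = M.erase a := by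
  ext x
  simp only [mem_sdiff, mem_erase, mem_dcl]
  constructor
  · rintro ⟨hxM, hxD⟩
    obtain ⟨k, hk⟩ := hD
    exact ⟨fun hxa => hxD ⟨k, hk, mem_extremalRel.2 (Or.inr (Or.inr ⟨hxa, hDK hk⟩))⟩, hxM⟩
  · rintro ⟨hxa, hxM⟩
    refine ⟨hxM, fun ⟨d, hd, hxd⟩ => ?_⟩
    rcases mem_extremalRel.1 hxd with ⟨rfl, -⟩ | hxd | ⟨hxa', -⟩
    · exact disjoint_left.1 hMK hxM (hDK hd)
    · exact disjoint_left.1 hMK hxM (mem_product.1 (hpK hxd)).1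
    · exact hxa hxa'

end Extremal

namespace IsMinExt

variable {M K : Finset α} {p q : Finset (α × α)} {a : α}

lemma eq_extremalRel (h : IsMinExt M K p q) (ha : M ∩ dcl q K ⊆ {a}) :
    q = extremalRel M K p a := by
  have hbelow : ∀ {x y}, x ∈ M → y ∈ K → (x, y) ∈ q → x = a := fun hx hy hxy =>
    mem_singleton.1 (ha (mem_inter.2 ⟨hx, mem_dcl.2 ⟨_, hy, hxy⟩⟩))
  ext ⟨x, y⟩
  rw [mem_extremalRel]
  constructor
  · intro hxy
    obtain ⟨hx, hy⟩ := mem_product.1 (h.subset hxy)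
    rcases mem_union.1 hy with hy | hy
    · exact Or.inl ⟨h.eq_of_le_of_mem_M hy hxy, hx⟩
    rcases mem_union.1 hx with hx | hx
    · exact Or.inr (Or.inr ⟨hbelow hx hy hxy, hy⟩)
    · exact Or.inr (Or.inl (h.mem_p_iff.2 ⟨hxy, hx, hy⟩))
  · rintro (⟨rfl, hx⟩ | hxy | ⟨rfl, hy⟩)
    · exact h.refl x hx
    · exact (h.mem_p_iff.1 hxy).1
    · obtain ⟨b, hb, hby⟩ := h.exists_mem_M_le (mem_union_right _ hy)
      exact hbelow hb hy hby ▸ hby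

lemma exists_eq_extremalRel (h : IsMinExt M K p q) (hm : 1 ≤ M.card)
    (hu : ∀ D ∈ (downsets K p).erase ∅, (M \ dcl q D).card = M.card - 1) :
    ∃ a ∈ M, q = extremalRel M K p a := by
  obtain ⟨a, haM, ha⟩ : ∃ a ∈ M, M ∩ dcl q K ⊆ {a} := by
    rcases K.eq_empty_or_nonempty with rfl | hK
    · obtain ⟨a, ha⟩ := card_pos.1 hm
      exact ⟨a, ha, by simp⟩
    have hK : K ∈ (downsets K p).erase ∅ := mem_erase.2 ⟨hK.ne_empty,
      mem_downsets.2 ⟨subset_rfl, fun _ _ x hx => (h.mem_p_iff.1 hx).2.1⟩⟩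
    have hcard := card_sdiff_add_card_inter M (dcl q K)
    obtain ⟨a, ha⟩ := card_eq_one.1 (show (M ∩ dcl q K).card = 1 by rw [hu K hK] at hcard; omega)
    exact ⟨a, (mem_inter.1 (ha ▸ mem_singleton_self a)).1, ha.le⟩
  exact ⟨a, haM, h.eq_extremalRel ha⟩

end IsMinExt

/-- Theorem 6.7: for `Q ∈ E(M,P)` with `#M = m ≥ 1`,
`d(Q) = Σ_{D downset of P} 2^{#(M ∖ QD)} ≤ 2^{m−1}(d(P)+1)`, with equality in the
bound exactly when `Q` is isomorphic to `A_{m−1} + (A_1 ⊕ P)`. -/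
theorem stmt_19 (M K : Finset α) (hMK : Disjoint M K) (hm : 1 ≤ M.card)
    (p q : Finset (α × α)) (hp : IsPOon K p) (hq : q ∈ extPOs M K p) :
    (dnum (M ∪ K) q = ∑ D ∈ downsets K p, 2 ^ (M \ dcl q D).card) ∧
    (dnum (M ∪ K) q ≤ 2 ^ (M.card - 1) * (dnum K p + 1)) ∧
    (dnum (M ∪ K) q = 2 ^ (M.card - 1) * (dnum K p + 1) ↔
      ∃ a ∈ M, POIso (M ∪ K) q (M ∪ K)
        (((M ∪ K).image fun x => (x, x)) ∪ p ∪ (({a} : Finset α) ×ˢ K))) := by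
  have h := IsMinExt.of_mem_extPOs hMK hq
  refine ⟨h.dnum_eq_sum, h.dnum_le, fun heq => ?_, fun ⟨a, haM, hiso⟩ => ?_⟩
  · obtain ⟨a, haM, rfl⟩ := h.exists_eq_extremalRel hm ((h.dnum_eq_iff hm).1 heq)
    exact ⟨a, haM, id, Set.bijOn_id _, fun _ _ _ _ => Iff.rfl⟩
  · have hr := isMinExt_extremalRel hMK hp haM
    rw [dnum_eq_of_POIso h.subset hr.subset hiso, hr.dnum_eq_iff hm]
    intro D hD
    obtain ⟨hne, hD⟩ := mem_erase.1 hD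
    rw [sdiff_dcl_extremalRel hMK hp.1 (mem_downsets.1 hD).1 (nonempty_iff_ne_empty.2 hne),
      card_erase_of_mem haM]
end
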